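/- Let ℓ > 0, k > 0, and let φ : [0,ℓ] → ℝ be twice continuously differentiable with φ''(s) + (2 cosh⁻²(s) − k²) φ(s) = 0 on [0,ℓ], φ(0) = 0, and φ(ℓ) = tanh(ℓ). Then φ'(ℓ) > cosh⁻²(ℓ) = tanh'(ℓ); that is, every nonzero Fourier mode of a solution of L̃u = 0 vanishing at s = 0 fails the Robin boundary condition φ'(ℓ) tanh(ℓ) − φ(ℓ) cosh⁻²(ℓ) = 0 with strict positive sign. -/

import Mathlib

/-!
`tanh` solves the `k = 0` mode equation, so the Wronskian `W = φ' tanh - φ cosh⁻²` of `φ` and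
`tanh` satisfies `W' = k² φ tanh`. Let `c` be the last point of `[0, ℓ]` where `φ ≤ 0`
(it exists since `φ 0 = 0` and `φ ℓ = tanh ℓ > 0`). There `φ c ≤ 0 ≤ φ' c`, so `W c ≥ 0`,
and `W` increases strictly on `[c, ℓ]` because `φ > 0` there. Hence
`tanh ℓ * (φ' ℓ - cosh⁻² ℓ) = W ℓ > 0`.
-/

open Real Set Topology

namespace Real

theorem hasDerivAt_tanh (x : ℝ) : HasDerivAt tanh ((cosh x ^ 2)⁻¹) x := by
  rw [show tanh = sinh / cosh from funext tanh_eq_sinh_div_cosh]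
  refine ((hasDerivAt_sinh x).div (hasDerivAt_cosh x) (cosh_pos x).ne').congr_deriv ?_
  rw [inv_eq_one_div, ← cosh_sq_sub_sinh_sq x]
  ring

theorem hasDerivAt_inv_cosh_sq (x : ℝ) :
    HasDerivAt (fun y => (cosh y ^ 2)⁻¹) (-2 * (cosh x ^ 2)⁻¹ * tanh x) x := by
  refine (((hasDerivAt_cosh x).pow 2).inv (pow_ne_zero 2 (cosh_pos x).ne')).congr_deriv ?_
  have := (cosh_pos x).ne'
  simp only [Pi.pow_apply, tanh_eq_sinh_div_cosh, Nat.cast_ofNat]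
  field_simp
  ring

theorem tanh_pos {x : ℝ} (hx : 0 < x) : 0 < tanh x := by
  rw [tanh_eq_sinh_div_cosh]
  exact div_pos (sinh_pos_iff.2 hx) (cosh_pos x)

theorem tanh_nonneg {x : ℝ} (hx : 0 ≤ x) : 0 ≤ tanh x := by
  rw [tanh_eq_sinh_div_cosh]
  exact div_nonneg (sinh_nonneg_iff.2 hx) (cosh_pos x).le

end Real

theorem hasDerivAt_wronskian {u u' v v' : ℝ → ℝ} {x u'' v'' : ℝ}
    (hu : HasDerivAt u (u' x) x) (hu' : HasDerivAt u' u'' x)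
    (hv : HasDerivAt v (v' x) x) (hv' : HasDerivAt v' v'' x) :
    HasDerivAt (fun s => u' s * v s - u s * v' s) (u'' * v x - u x * v'') x := by
  refine ((hu'.mul hv).sub (hu.mul hv')).congr_deriv ?_
  ring

theorem hasDerivAt_wronskian_tanh {u u' : ℝ → ℝ} {x u'' k : ℝ}
    (hu : HasDerivAt u (u' x) x) (hu' : HasDerivAt u' u'' x)
    (hode : u'' + (2 * (cosh x ^ 2)⁻¹ - k ^ 2) * u x = 0) :
    HasDerivAt (fun s => u' s * tanh s - u s * (cosh s ^ 2)⁻¹) (k ^ 2 * (u x * tanh x)) x := by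
  refine (hasDerivAt_wronskian hu hu' (hasDerivAt_tanh x) (hasDerivAt_inv_cosh_sq x)).congr_deriv ?_
  rw [eq_sub_of_add_eq hode]
  ring

theorem exists_last_nonpos {f : ℝ → ℝ} {a b : ℝ} (hab : a ≤ b) (hf : ContinuousOn f (Icc a b))
    (ha : f a ≤ 0) (hb : 0 < f b) : ∃ c ∈ Ico a b, f c ≤ 0 ∧ ∀ x ∈ Ioc c b, 0 < f x := by
  have hS : IsCompact (Icc a b ∩ f ⁻¹' Iic 0) :=
    isCompact_Icc.of_isClosed_subset (hf.preimage_isClosed_of_isClosed isClosed_Icc isClosed_Iic)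
      inter_subset_left
  obtain ⟨c, ⟨hc, hfc⟩, hmax⟩ := hS.exists_isGreatest ⟨a, ⟨left_mem_Icc.2 hab, ha⟩⟩
  have hcb : c ≠ b := by rintro rfl; exact (not_le.2 hb) hfc
  refine ⟨c, ⟨hc.1, lt_of_le_of_ne hc.2 hcb⟩, hfc, fun x hx => ?_⟩
  by_contra! hfx
  exact (not_le.2 hx.1) (hmax ⟨⟨hc.1.trans hx.1.le, hx.2⟩, hfx⟩)

theorem HasDerivAt.nonneg_of_nonpos_of_eventually_pos_right {f : ℝ → ℝ} {f' c : ℝ}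
    (hf : HasDerivAt f f' c) (hc : f c ≤ 0) (hpos : ∀ᶠ x in 𝓝[>] c, 0 < f x) : 0 ≤ f' := by
  refine ge_of_tendsto ((hasDerivAt_iff_tendsto_slope.1 hf).mono_left (nhdsGT_le_nhdsNE c)) ?_
  filter_upwards [hpos, self_mem_nhdsWithin] with x hfx hcx
  rw [slope_def_field]
  exact div_nonneg (by linarith) (sub_nonneg.2 (le_of_lt hcx))

theorem strictMonoOn_Icc_of_hasDerivAt_pos {f f' : ℝ → ℝ} {a b : ℝ}
    (hf : ∀ x ∈ Icc a b, HasDerivAt f (f' x) x) (hpos : ∀ x ∈ Ioo a b, 0 < f' x) :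
    StrictMonoOn f (Icc a b) := by
  refine strictMonoOn_of_hasDerivWithinAt_pos (convex_Icc a b)
    (fun x hx => (hf x hx).continuousAt.continuousWithinAt)
    (fun x hx => (hf x (interior_subset hx)).hasDerivWithinAt) ?_
  rwa [interior_Icc]

theorem fourier_mode_fails_robin_general
    (ℓ k : ℝ) (hℓ : 0 < ℓ) (hk : 0 < k)
    (φ φ' φ'' : ℝ → ℝ)
    (hφ' : ∀ s ∈ Set.Icc 0 ℓ, HasDerivAt φ (φ' s) s)
    (hφ'' : ∀ s ∈ Set.Icc 0 ℓ, HasDerivAt φ' (φ'' s) s)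
    (hODE : ∀ s ∈ Set.Icc 0 ℓ,
      φ'' s + (2 * ((Real.cosh s)^2)⁻¹ - k^2) * φ s = 0)
    (h0 : φ 0 = 0) (hℓval : φ ℓ = Real.tanh ℓ) :
    φ' ℓ > ((Real.cosh ℓ)^2)⁻¹ := by
  set W : ℝ → ℝ := fun s => φ' s * tanh s - φ s * (cosh s ^ 2)⁻¹
  have hW : ∀ s ∈ Icc 0 ℓ, HasDerivAt W (k ^ 2 * (φ s * tanh s)) s := fun s hs =>
    hasDerivAt_wronskian_tanh (hφ' s hs) (hφ'' s hs) (hODE s hs)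
  obtain ⟨c, hc, hφc, hφpos⟩ := exists_last_nonpos hℓ.le
    (fun s hs => (hφ' s hs).continuousAt.continuousWithinAt) h0.le (hℓval ▸ tanh_pos hℓ)
  have hφ'c : 0 ≤ φ' c :=
    (hφ' c (Ico_subset_Icc_self hc)).nonneg_of_nonpos_of_eventually_pos_right hφc
      (mem_nhdsGT_iff_exists_Ioo_subset.2 ⟨ℓ, hc.2, fun x hx => hφpos x (Ioo_subset_Ioc_self hx)⟩)
  have hWc : 0 ≤ W c := by
    have := mul_nonneg hφ'c (tanh_nonneg hc.1)
    have := mul_nonpos_of_nonpos_of_nonneg hφc (inv_nonneg.2 (sq_nonneg (cosh c)))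
    linarith
  have hWmono : StrictMonoOn W (Icc c ℓ) :=
    strictMonoOn_Icc_of_hasDerivAt_pos (fun s hs => hW s (Icc_subset_Icc_left hc.1 hs))
      fun s hs => by
        have := hφpos s (Ioo_subset_Ioc_self hs)
        have := tanh_pos (hc.1.trans_lt hs.1)
        positivity
  have hWℓ : 0 < tanh ℓ * (φ' ℓ - (cosh ℓ ^ 2)⁻¹) := by
    have := hWmono (left_mem_Icc.2 hc.2.le) (right_mem_Icc.2 hc.2.le) hc.2
    simp only [W, hℓval] at this
    linarith
  exact sub_pos.1 (pos_of_mul_pos_right hWℓ (tanh_pos hℓ).le)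

/-- Every nonzero Fourier mode of a solution of `L̃ u = 0` vanishing at `s = 0` fails
the Robin boundary condition with a strictly positive sign: if `φ'' + (2 cosh⁻² − k²) φ = 0`
on `[0,ℓ]`, `φ(0) = 0` and `φ(ℓ) = tanh ℓ`, then `φ'(ℓ) > cosh⁻²(ℓ) = tanh'(ℓ)`. -/
theorem fourier_mode_fails_robin
    (ℓ k : ℝ) (hℓ : 0 < ℓ) (hk : 0 < k)
    (φ φ' φ'' : ℝ → ℝ)
    (hφ' : ∀ s ∈ Set.Icc 0 ℓ, HasDerivAt φ (φ' s) s)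
    (hφ'' : ∀ s ∈ Set.Icc 0 ℓ, HasDerivAt φ' (φ'' s) s)
    (hcont : ContinuousOn φ'' (Set.Icc 0 ℓ))
    (hODE : ∀ s ∈ Set.Icc 0 ℓ,
      φ'' s + (2 * ((Real.cosh s)^2)⁻¹ - k^2) * φ s = 0)
    (h0 : φ 0 = 0) (hℓval : φ ℓ = Real.tanh ℓ) :
    φ' ℓ > ((Real.cosh ℓ)^2)⁻¹ :=
  fourier_mode_fails_robin_general ℓ k hℓ hk φ φ' φ'' hφ' hφ'' hODE h0 hℓval
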